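/- arXiv:1109.3557 — 2 statements merged into one kernel-verified Lean document; each statement's English description precedes it below -/
import Mathlib

section
/- Let (Vⁱ, Aⁱ) be a quasicomplex of Hilbert spaces whose Laplacians Δⁱ = Aⁱ⁻¹(Aⁱ⁻¹)* + (Aⁱ)*Aⁱ are Fredholm, and let Gⁱ be parametrices of Δⁱ with Gⁱ⁺¹ Aⁱ − Aⁱ Gⁱ compact. Then the operators Pⁱ = Gⁱ⁻¹ (Aⁱ⁻¹)* form a parametrix of the quasicomplex: Pⁱ⁺¹ Aⁱ + Aⁱ⁻¹ Pⁱ − Id_{Vⁱ} is compact for all i. -/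
/-!
With `Δ = A₀ B₀ + B₁ A₁` and `P = G B`, the defect of the parametrix is the algebraic identity
`G₁ B₁ A₁ + A₀ G₀ B₀ - 1 = (G₁ Δ - 1) - (G₁ A₀ - A₀ G₀) B₀`,
and both terms on the right are compact: the first because `G₁` is a left parametrix of `Δ`,
the second because compact operators form a right ideal.
-/

namespace ContinuousLinearMap

variable {R : Type*} [Ring R] {E F H : Type*}
  [TopologicalSpace E] [AddCommGroup E] [Module R E]
  [TopologicalSpace F] [AddCommGroup F] [Module R F] [IsTopologicalAddGroup F]
  [TopologicalSpace H] [AddCommGroup H] [Module R H]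

theorem parametrix_defect_eq (A₀ : E →L[R] F) (A₁ : F →L[R] H) (B₀ : F →L[R] E)
    (B₁ : H →L[R] F) (G₀ : E →L[R] E) (G₁ : F →L[R] F) :
    (G₁.comp B₁).comp A₁ + A₀.comp (G₀.comp B₀) - ContinuousLinearMap.id R F
      = (G₁.comp (A₀.comp B₀ + B₁.comp A₁) - ContinuousLinearMap.id R F) - (G₁.comp A₀ - A₀.comp G₀).comp B₀ := by
  ext x
  simp only [add_apply, sub_apply, comp_apply, id_apply, map_add]
  abel

theorem isCompactOperator_parametrix_defect {A₀ : E →L[R] F} {A₁ : F →L[R] H}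
    {B₀ : F →L[R] E} {B₁ : H →L[R] F} {G₀ : E →L[R] E} {G₁ : F →L[R] F}
    (hG : IsCompactOperator ⇑(G₁.comp (A₀.comp B₀ + B₁.comp A₁) - ContinuousLinearMap.id R F))
    (hcomm : IsCompactOperator ⇑(G₁.comp A₀ - A₀.comp G₀)) :
    IsCompactOperator ⇑((G₁.comp B₁).comp A₁ + A₀.comp (G₀.comp B₀) - ContinuousLinearMap.id R F) := by
  rw [parametrix_defect_eq]
  exact hG.sub (hcomm.comp_clm B₀)

end ContinuousLinearMap

theorem stmt_13_general {V : ℤ → Type*} [∀ i, NormedAddCommGroup (V i)]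
    [∀ i, InnerProductSpace ℂ (V i)] [∀ i, CompleteSpace (V i)]
    (A : ∀ i, V i →L[ℂ] V (i+1)) (G : ∀ i, V i →L[ℂ] V i)
    (hGl : ∀ i, IsCompactOperator ⇑((G (i+1)).comp
        ((A i).comp (ContinuousLinearMap.adjoint (A i))
          + (ContinuousLinearMap.adjoint (A (i+1))).comp (A (i+1)))
        - ContinuousLinearMap.id ℂ (V (i+1))))
    (hGcomm : ∀ i, IsCompactOperator ⇑((G (i+1)).comp (A i) - (A i).comp (G i))) :
    ∀ i, IsCompactOperator ⇑(((G (i+1)).comp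
          (ContinuousLinearMap.adjoint (A (i+1)))).comp (A (i+1))
        + (A i).comp ((G i).comp (ContinuousLinearMap.adjoint (A i)))
        - ContinuousLinearMap.id ℂ (V (i+1))) :=
  fun i => ContinuousLinearMap.isCompactOperator_parametrix_defect (hGl i) (hGcomm i)

/-- Let `(Vⁱ, Aⁱ)` be a quasicomplex of Hilbert spaces
(`Aⁱ⁺¹ Aⁱ` compact) whose Laplacians `Δⁱ⁺¹ = Aⁱ (Aⁱ)* + (Aⁱ⁺¹)* Aⁱ⁺¹` are
Fredholm, and let `Gⁱ` be parametrices of the Laplacians (`G Δ − Id` and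
`Δ G − Id` compact) satisfying `Gⁱ⁺¹ Aⁱ − Aⁱ Gⁱ` compact. Then the operators
`Pⁱ = Gⁱ⁻¹ (Aⁱ⁻¹)*` form a parametrix of the quasicomplex:
`Pⁱ⁺¹ Aⁱ + Aⁱ⁻¹ Pⁱ − Id` is compact at every step. -/
theorem stmt_13 {V : ℤ → Type*} [∀ i, NormedAddCommGroup (V i)]
    [∀ i, InnerProductSpace ℂ (V i)] [∀ i, CompleteSpace (V i)]
    (A : ∀ i, V i →L[ℂ] V (i+1)) (G : ∀ i, V i →L[ℂ] V i)
    (hquasi : ∀ i, IsCompactOperator ⇑((A (i+1)).comp (A i)))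
    (hFred : ∀ i,
      FiniteDimensional ℂ ↥(LinearMap.ker ((((A i).comp (ContinuousLinearMap.adjoint (A i))
        + (ContinuousLinearMap.adjoint (A (i+1))).comp (A (i+1)) : V (i+1) →L[ℂ] V (i+1)) :
          V (i+1) →ₗ[ℂ] V (i+1)))) ∧
      FiniteDimensional ℂ (V (i+1) ⧸
        LinearMap.range ((((A i).comp (ContinuousLinearMap.adjoint (A i))
          + (ContinuousLinearMap.adjoint (A (i+1))).comp (A (i+1)) : V (i+1) →L[ℂ] V (i+1)) :
            V (i+1) →ₗ[ℂ] V (i+1)))))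
    (hGl : ∀ i, IsCompactOperator ⇑((G (i+1)).comp
        ((A i).comp (ContinuousLinearMap.adjoint (A i))
          + (ContinuousLinearMap.adjoint (A (i+1))).comp (A (i+1)))
        - ContinuousLinearMap.id ℂ (V (i+1))))
    (hGr : ∀ i, IsCompactOperator ⇑(((A i).comp (ContinuousLinearMap.adjoint (A i))
          + (ContinuousLinearMap.adjoint (A (i+1))).comp (A (i+1))).comp (G (i+1))
        - ContinuousLinearMap.id ℂ (V (i+1))))
    (hGcomm : ∀ i, IsCompactOperator ⇑((G (i+1)).comp (A i) - (A i).comp (G i))) :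
    ∀ i, IsCompactOperator ⇑(((G (i+1)).comp
          (ContinuousLinearMap.adjoint (A (i+1)))).comp (A (i+1))
        + (A i).comp ((G i).comp (ContinuousLinearMap.adjoint (A i)))
        - ContinuousLinearMap.id ℂ (V (i+1))) :=
  stmt_13_general A G hGl hGcomm
end

section
/- Let (Vⁱ, Dⁱ) be a Fredholm complex of bounded operators between Hilbert spaces, and define the rolled-up operator T : ⊕ᵢ V^{2i} → ⊕ᵢ V^{2i+1} by T = ⊕ᵢ (D^{2i} + (D^{2i+1})*) restricted appropriately (block matrix with D^{2i} and (D^{2i+1})* entries). Then T is a Fredholm operator and ind T = χ(V) = ∑ᵢ (-1)ⁱ dim Hⁱ(V). -/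
/-!
The range of `Dⁱ` has finite codimension in the closed subspace `ker Dⁱ⁺¹`, hence is closed, and
then so is the range of its adjoint. Hodge theory identifies `Hⁱ` with the harmonic space
`ker Dⁱ ⊓ ker (Dⁱ⁻¹)*` and splits `Vⁱ` orthogonally as
`range Dⁱ⁻¹ ⊕ range (Dⁱ)* ⊕ harmonic`. Since `range D²ʲ ⊥ range (D²ʲ⁺¹)*`, the equation `T u = 0`
forces both summands of every component to vanish, so `ker T` is the sum of the even harmonic
spaces; and `T` maps onto the `v` with `vⱼ ∈ range D²ʲ ⊕ range (D²ʲ⁺¹)*`, so `coker T` is the sum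
of the odd harmonic spaces. The index is therefore the alternating sum of the Betti numbers.
-/

open Submodule
open scoped InnerProduct

theorem IsCompl.sup_inf_of_le {α : Type*} [Lattice α] [BoundedOrder α] [IsModularLattice α]
    {a b c d : α} (hab : IsCompl a b) (hcd : IsCompl c d) (hcb : c ≤ b) :
    IsCompl (c ⊔ a) (b ⊓ d) := by
  refine .of_eq ?_ ?_
  · rw [← inf_assoc, sup_inf_assoc_of_le a hcb, hab.inf_eq_bot, sup_bot_eq, hcd.inf_eq_bot]
  · rw [sup_comm c, sup_assoc, inf_comm, ← sup_inf_assoc_of_le d hcb, hcd.sup_eq_top, top_inf_eq,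
      hab.sup_eq_top]

namespace ContinuousLinearMap

theorem range_le_ker_of_comp_eq_zero {R M N P : Type*} [Semiring R]
    [AddCommMonoid M] [Module R M] [TopologicalSpace M] [AddCommMonoid N] [Module R N]
    [TopologicalSpace N] [AddCommMonoid P] [Module R P] [TopologicalSpace P]
    {f : M →L[R] N} {g : N →L[R] P} (hgf : g ∘L f = 0) : f.range ≤ g.ker :=
  LinearMap.range_le_ker_iff.2 (congrArg toLinearMap hgf)

variable {𝕜 E F G : Type*} [RCLike 𝕜]
  [NormedAddCommGroup E] [InnerProductSpace 𝕜 E] [NormedAddCommGroup F] [InnerProductSpace 𝕜 F]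
  [NormedAddCommGroup G] [InnerProductSpace 𝕜 G]

theorem ker_comp_subtypeL_orthogonal_ker (f : E →L[𝕜] F) : (f ∘L f.kerᗮ.subtypeL).ker = ⊥ :=
  eq_bot_iff.2 fun x hx ↦ by
    simpa using ((orthogonal_disjoint f.ker).le_bot ⟨hx, x.2⟩ : (x : E) ∈ ⊥)

theorem apply_starProjection_orthogonal_ker [CompleteSpace E] (f : E →L[𝕜] F) (x : E) :
    f (f.kerᗮ.starProjection x) = f x := by
  have h : f (f.ker.starProjection x) = 0 := f.ker.starProjection_apply_mem x
  rw [starProjection_orthogonal_val, map_sub, h, sub_zero]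

theorem range_comp_subtypeL_orthogonal_ker [CompleteSpace E] (f : E →L[𝕜] F) :
    (f ∘L f.kerᗮ.subtypeL).range = f.range := by
  refine le_antisymm (LinearMap.range_comp_le_range _ _) ?_
  rintro _ ⟨x, rfl⟩
  exact ⟨⟨_, f.kerᗮ.starProjection_apply_mem x⟩, f.apply_starProjection_orthogonal_ker x⟩

theorem isClosed_range_of_finiteDimensional_quotient [CompleteSpace E] [CompleteSpace F]
    (f : E →L[𝕜] F) [FiniteDimensional 𝕜 (F ⧸ f.range)] : IsClosed (f.range : Set F) := by
  obtain ⟨C, hC⟩ := f.range.exists_isCompl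
  have : FiniteDimensional 𝕜 C := (f.range.quotientEquivOfIsCompl C hC).finiteDimensional
  rw [← range_comp_subtypeL_orthogonal_ker] at hC ⊢
  exact closed_complemented_range_of_isCompl_of_ker_eq_bot _ C hC C.closed_of_finiteDimensional
    f.ker_comp_subtypeL_orthogonal_ker

theorem isClosed_range_of_le_of_finiteDimensional_quotient [CompleteSpace E] [CompleteSpace F]
    (f : E →L[𝕜] F) {N : Submodule 𝕜 F} (hN : IsClosed (N : Set F)) (hfN : f.range ≤ N)
    [FiniteDimensional 𝕜 (N ⧸ f.range.comap N.subtype)] : IsClosed (f.range : Set F) := by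
  have : CompleteSpace N := hN.completeSpace_coe
  let g := f.codRestrict N fun x ↦ hfN ⟨x, rfl⟩
  have hg : g.range = f.range.comap N.subtype := LinearMap.range_codRestrict _ _ _
  have : FiniteDimensional 𝕜 (N ⧸ g.range) := by rwa [hg]
  have :=
    hN.isClosedEmbedding_subtypeVal.isClosedMap _ g.isClosed_range_of_finiteDimensional_quotient
  change IsClosed (N.subtype '' _) at this
  rwa [← Submodule.map_coe, hg, map_comap_subtype, inf_eq_right.2 hfN] at this

theorem range_adjoint_eq_orthogonal_ker [CompleteSpace E] [CompleteSpace F] (f : E →L[𝕜] F)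
    (hf : IsClosed (f.range : Set F)) : (f†).range = f.kerᗮ := by
  refine le_antisymm (f.orthogonal_ker ▸ le_topologicalClosure _) fun x hx ↦ ?_
  set f₀ := f ∘L f.kerᗮ.subtypeL
  have hinj : Function.Injective f₀ := LinearMap.ker_eq_bot.1 f.ker_comp_subtypeL_orthogonal_ker
  have hclo : IsClosed (Set.range f₀) := by
    change IsClosed (f₀.range : Set F)
    rwa [range_comp_subtypeL_orthogonal_ker]
  have : CompleteSpace f₀.range := hclo.completeSpace_coe
  let g : F →L[𝕜] E :=
    f.kerᗮ.subtypeL ∘L ((f₀.equivRange hinj hclo).symm : f₀.range →L[𝕜] f.kerᗮ) ∘L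
      f₀.range.orthogonalProjectionOnto
  have hgf : g ∘L f = f.kerᗮ.starProjection := by
    ext e
    let p : f.kerᗮ := ⟨_, f.kerᗮ.starProjection_apply_mem e⟩
    have hfe : f e = f₀ p := (f.apply_starProjection_orthogonal_ker e).symm
    have hproj : f₀.range.orthogonalProjectionOnto (f₀ p) = ⟨f₀ p, p, rfl⟩ :=
      orthogonalProjectionOnto_mem_subspace_eq_self (K := f₀.range) ⟨f₀ p, p, rfl⟩
    change ((f₀.equivRange hinj hclo).symm (f₀.range.orthogonalProjectionOnto (f e)) : E) = p
    rw [hfe, hproj, equivRange_symm_apply]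
  refine ⟨(g†) x, ?_⟩
  rw [coe_coe, ← comp_apply, ← adjoint_comp, hgf, (isSelfAdjoint_starProjection _).adjoint_eq,
    starProjection_eq_self_iff.2 hx]

variable {f : E →L[𝕜] F} {g : F →L[𝕜] G}

theorem orthogonal_ker_le_ker_adjoint [CompleteSpace E] [CompleteSpace F] (hgf : g ∘L f = 0) :
    g.kerᗮ ≤ (f†).ker := by
  rw [← orthogonal_range]
  exact orthogonal_le (range_le_ker_of_comp_eq_zero hgf)

theorem isCompl_range_ker_adjoint [CompleteSpace E] [CompleteSpace F]
    (hf : IsClosed (f.range : Set F)) : IsCompl f.range (f†).ker := by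
  have := hf.completeSpace_coe
  rw [← orthogonal_range]
  exact f.range.isCompl_orthogonal

noncomputable def cohomologyEquivKerInfKerAdjoint [CompleteSpace E] [CompleteSpace F]
    (hgf : g ∘L f = 0) (hf : IsClosed (f.range : Set F)) :
    (g.ker ⧸ f.range.comap g.ker.subtype) ≃ₗ[𝕜] ↥(g.ker ⊓ (f†).ker) :=
  (quotientEquivOfIsCompl _ _ (isCompl_comap_subtype_of_isCompl_of_le
      (isCompl_range_ker_adjoint hf) (range_le_ker_of_comp_eq_zero hgf))).trans <|
    (equivMapOfInjective _ g.ker.injective_subtype _).trans <|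
      LinearEquiv.ofEq _ _ (map_comap_subtype _ _)

theorem orthogonal_ker_adjoint_le_ker [CompleteSpace E] [CompleteSpace F] [CompleteSpace G]
    (hgf : g ∘L f = 0) : (f†).kerᗮ ≤ g.ker := by
  have hfg : f† ∘L g† = 0 := by rw [← adjoint_comp, hgf, map_zero]
  simpa only [adjoint_adjoint] using orthogonal_ker_le_ker_adjoint hfg

theorem add_adjoint_apply_eq_zero_iff [CompleteSpace F] [CompleteSpace G] (hgf : g ∘L f = 0)
    (x : E) (y : G) : f x + (g†) y = 0 ↔ f x = 0 ∧ (g†) y = 0 := by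
  refine ⟨fun h ↦ ?_, fun ⟨h₁, h₂⟩ ↦ by rw [h₁, h₂, add_zero]⟩
  have hfx : f x = 0 := by
    rw [← inner_self_eq_zero (𝕜 := 𝕜)]
    calc inner 𝕜 (f x) (f x) = inner 𝕜 (f x) (f x + (g†) y) := by
          rw [inner_add_right, adjoint_inner_right, ← comp_apply, hgf, zero_apply,
            inner_zero_left, add_zero]
      _ = 0 := by rw [h, inner_zero_right]
  exact ⟨hfx, by rwa [hfx, zero_add] at h⟩

theorem isCompl_range_sup_range_adjoint [CompleteSpace E] [CompleteSpace F] [CompleteSpace G]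
    (hgf : g ∘L f = 0) (hf : IsClosed (f.range : Set F)) (hg : IsClosed (g.range : Set G)) :
    IsCompl (f.range ⊔ (g†).range) (g.ker ⊓ (f†).ker) := by
  have hg' : IsCompl (g†).range g.ker := by
    rw [range_adjoint_eq_orthogonal_ker g hg]
    exact g.ker.isCompl_orthogonal.symm
  exact hg'.sup_inf_of_le (isCompl_range_ker_adjoint hf) (range_le_ker_of_comp_eq_zero hgf)

end ContinuousLinearMap

open ContinuousLinearMap

theorem Finset.sum_range_even_sub_sum_range_odd (c : ℕ → ℤ) (n : ℕ) :
    ∑ j ∈ range n, c (2 * j) - ∑ j ∈ range n, c (2 * j + 1) =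
      ∑ i ∈ range (2 * n), (-1) ^ i * c i := by
  induction n with
  | zero => simp
  | succ n ih =>
    rw [sum_range_succ, sum_range_succ, show 2 * (n + 1) = 2 * n + 1 + 1 by ring, sum_range_succ,
      sum_range_succ, ← ih, (even_two_mul n).neg_one_pow, (odd_two_mul_add_one n).neg_one_pow]
    ring

section FredholmComplex

variable {𝕜 : Type*} [RCLike 𝕜] {V : ℕ → Type*} [∀ i, NormedAddCommGroup (V i)]
  [∀ i, InnerProductSpace 𝕜 (V i)] (D : ∀ i, V i →L[𝕜] V (i + 1))

structure IsFredholmComplex : Prop where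
  comp_eq_zero : ∀ i, D (i + 1) ∘L D i = 0
  finiteDimensional_ker_zero : FiniteDimensional 𝕜 (D 0).ker
  finiteDimensional_cohomology :
    ∀ i, FiniteDimensional 𝕜 ((D (i + 1)).ker ⧸ (D i).range.comap (D (i + 1)).ker.subtype)

noncomputable def bettiNumber : ℕ → ℕ
  | 0 => Module.finrank 𝕜 (D 0).ker
  | i + 1 => Module.finrank 𝕜 ((D (i + 1)).ker ⧸ (D i).range.comap (D (i + 1)).ker.subtype)

variable [∀ i, CompleteSpace (V i)]

noncomputable def harmonicSpace : ∀ i, Submodule 𝕜 (V i)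
  | 0 => (D 0).ker
  | i + 1 => (D (i + 1)).ker ⊓ (D i)†.ker

def IsRolledUp {m : ℕ} (T : PiLp 2 (fun j : Fin (m + 1) => V (2 * j)) →L[𝕜]
    PiLp 2 (fun j : Fin (m + 1) => V (2 * j + 1))) : Prop :=
  ∀ u j, T u j = D (2 * j) (u j) +
    adjoint (D (2 * j + 1)) (if h : (j : ℕ) + 1 < m + 1 then u ⟨j + 1, h⟩ else 0)

variable {D}

theorem harmonicSpace_le_ker : ∀ i, harmonicSpace D i ≤ (D i).ker
  | 0 => le_rfl
  | _ + 1 => inf_le_left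

namespace IsFredholmComplex

theorem isClosed_range (hD : IsFredholmComplex D) (i : ℕ) :
    IsClosed ((D i).range : Set (V (i + 1))) :=
  have := hD.finiteDimensional_cohomology i
  (D i).isClosed_range_of_le_of_finiteDimensional_quotient (D (i + 1)).isClosed_ker
    (range_le_ker_of_comp_eq_zero (hD.comp_eq_zero i))

theorem finiteDimensional_harmonicSpace (hD : IsFredholmComplex D) :
    ∀ i, FiniteDimensional 𝕜 (harmonicSpace D i)
  | 0 => hD.finiteDimensional_ker_zero
  | i + 1 =>
    have := hD.finiteDimensional_cohomology i
    (cohomologyEquivKerInfKerAdjoint (hD.comp_eq_zero i) (hD.isClosed_range i)).finiteDimensional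

theorem finrank_harmonicSpace (hD : IsFredholmComplex D) :
    ∀ i, Module.finrank 𝕜 (harmonicSpace D i) = bettiNumber D i
  | 0 => rfl
  | i + 1 =>
    (cohomologyEquivKerInfKerAdjoint (hD.comp_eq_zero i) (hD.isClosed_range i)).finrank_eq.symm

theorem isCompl_range_sup_range_adjoint_harmonicSpace (hD : IsFredholmComplex D) (i : ℕ) :
    IsCompl ((D i).range ⊔ (D (i + 1))†.range) (harmonicSpace D (i + 1)) :=
  isCompl_range_sup_range_adjoint (hD.comp_eq_zero i) (hD.isClosed_range i)
    (hD.isClosed_range (i + 1))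

end IsFredholmComplex

namespace IsRolledUp

variable {m : ℕ} {T : PiLp 2 (fun j : Fin (m + 1) => V (2 * j)) →L[𝕜]
    PiLp 2 (fun j : Fin (m + 1) => V (2 * j + 1))}

theorem mem_ker_iff (hT : IsRolledUp D T) (hD2 : ∀ i, D (i + 1) ∘L D i = 0)
    (u : PiLp 2 fun j : Fin (m + 1) => V (2 * j)) :
    u ∈ T.ker ↔ ∀ j : Fin (m + 1), u j ∈ harmonicSpace D (2 * j) := by
  have hcomp : ∀ j, T u j = 0 ↔ D (2 * j) (u j) = 0 ∧ adjoint (D (2 * j + 1))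
      (if h : (j : ℕ) + 1 < m + 1 then u ⟨j + 1, h⟩ else 0) = 0 := fun j ↦ by
    rw [hT]
    exact add_adjoint_apply_eq_zero_iff (hD2 _) _ _
  rw [LinearMap.mem_ker, coe_coe]
  refine ⟨fun hu j ↦ ?_, fun hu ↦ PiLp.ext fun j ↦ (hcomp j).2 ⟨harmonicSpace_le_ker _ (hu j), ?_⟩⟩
  · have h := fun j ↦ (hcomp j).1 (by rw [hu]; rfl)
    obtain ⟨_ | k, hk⟩ := j
    · exact (h ⟨0, hk⟩).1
    · refine ⟨(h ⟨k + 1, hk⟩).1, ?_⟩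
      have h2 := (h ⟨k, by omega⟩).2
      rw [dif_pos hk] at h2
      exact h2
  · split_ifs with h
    · exact (hu ⟨j + 1, h⟩).2
    · exact map_zero _

noncomputable def kerEquiv (hT : IsRolledUp D T) (hD2 : ∀ i, D (i + 1) ∘L D i = 0) :
    T.ker ≃ₗ[𝕜] ∀ j : Fin (m + 1), harmonicSpace D (2 * j) where
  toFun u j := ⟨u.1 j, (hT.mem_ker_iff hD2 u).1 u.2 j⟩
  invFun v := ⟨WithLp.toLp 2 fun j ↦ v j, (hT.mem_ker_iff hD2 _).2 fun j ↦ (v j).2⟩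
  map_add' _ _ := rfl
  map_smul' _ _ := rfl
  left_inv _ := rfl
  right_inv _ := rfl

theorem exists_apply_eq (hT : IsRolledUp D T) (hD2 : ∀ i, D (i + 1) ∘L D i = 0)
    (hsupp : ∀ i, 2 * m + 1 < i → Subsingleton (V i))
    (a : ∀ j : Fin (m + 1), V (2 * j)) (b : ∀ j : Fin (m + 1), V (2 * j + 1 + 1)) :
    ∃ u, ∀ j, T u j = D (2 * j) (a j) + adjoint (D (2 * j + 1)) (b j) := by
  -- Projecting `a j` onto `(ker D)ᗮ ⊆ ker D†` and `b j` onto `(ker D†)ᗮ ⊆ ker D` kills the cross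
  -- terms of `T`.
  let a' : ∀ j : Fin (m + 1), V (2 * j) := fun j ↦ (D (2 * j)).kerᗮ.starProjection (a j)
  let b' : ∀ j : Fin (m + 1), V (2 * j + 1 + 1) := fun j ↦
    (adjoint (D (2 * j + 1))).kerᗮ.starProjection (b j)
  let c : ∀ j : Fin (m + 1), V (2 * j) := fun
    | ⟨0, _⟩ => 0
    | ⟨k + 1, h⟩ => b' ⟨k, by omega⟩
  refine ⟨WithLp.toLp 2 fun j ↦ a' j + c j, fun j ↦ ?_⟩
  have hc : D (2 * j) (c j) = 0 := by
    obtain ⟨_ | k, hk⟩ := j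
    · exact map_zero _
    · exact orthogonal_ker_adjoint_le_ker (hD2 (2 * k + 1)) (starProjection_apply_mem _ _)
  rw [hT, PiLp.toLp_apply, map_add, hc, add_zero, apply_starProjection_orthogonal_ker]
  congr 1
  split_ifs with h
  · have ha : adjoint (D (2 * j + 1)) (a' ⟨j + 1, h⟩) = 0 :=
      orthogonal_ker_le_ker_adjoint (hD2 (2 * j + 1)) (starProjection_apply_mem _ _)
    change adjoint (D (2 * j + 1)) (a' ⟨j + 1, h⟩ + b' j) = _
    rw [map_add, ha, zero_add, apply_starProjection_orthogonal_ker]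
  · have := hsupp (2 * j + 1 + 1) (by omega)
    rw [Subsingleton.elim (b j) 0, map_zero]

theorem map_range (hT : IsRolledUp D T) (hD2 : ∀ i, D (i + 1) ∘L D i = 0)
    (hsupp : ∀ i, 2 * m + 1 < i → Subsingleton (V i)) :
    T.range.map (WithLp.linearEquiv 2 𝕜 (∀ j : Fin (m + 1), V (2 * j + 1))).toLinearMap =
      pi Set.univ fun j : Fin (m + 1) ↦ (D (2 * j)).range ⊔ (adjoint (D (2 * j + 1))).range := by
  refine le_antisymm ?_ fun v hv ↦ ?_
  · rintro _ ⟨_, ⟨u, rfl⟩, rfl⟩ j -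
    change T u j ∈ _
    rw [hT]
    exact add_mem (mem_sup_left ⟨_, rfl⟩) (mem_sup_right ⟨_, rfl⟩)
  · have : ∀ j : Fin (m + 1), ∃ x y, D (2 * j) x + adjoint (D (2 * j + 1)) y = v j := fun j ↦ by
      obtain ⟨_, ⟨x, rfl⟩, _, ⟨y, rfl⟩, h⟩ := mem_sup.1 (hv j trivial)
      exact ⟨x, y, h⟩
    choose a b hab using this
    obtain ⟨u, hu⟩ := hT.exists_apply_eq hD2 hsupp a b
    exact ⟨T u, ⟨u, rfl⟩, funext fun j ↦ (hu j).trans (hab j)⟩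

noncomputable def cokerEquiv (hT : IsRolledUp D T) (hD : IsFredholmComplex D)
    (hsupp : ∀ i, 2 * m + 1 < i → Subsingleton (V i)) :
    (PiLp 2 (fun j : Fin (m + 1) => V (2 * j + 1)) ⧸ T.range) ≃ₗ[𝕜]
      ∀ j : Fin (m + 1), harmonicSpace D (2 * j + 1) :=
  (Quotient.equiv _ _ (WithLp.linearEquiv 2 𝕜 _) (hT.map_range hD.comp_eq_zero hsupp)).trans <|
    (quotientPi _).trans <| LinearEquiv.piCongrRight fun j ↦
      quotientEquivOfIsCompl _ _ (hD.isCompl_range_sup_range_adjoint_harmonicSpace (2 * j))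

end IsRolledUp

end FredholmComplex

/-- Let `(Vⁱ, Dⁱ)` be a Fredholm complex of bounded operators between
Hilbert spaces, supported in degrees `0, …, 2m+1`. Let
`T : ⊕ⱼ V^{2j} → ⊕ⱼ V^{2j+1}` be the rolled-up operator, given in coordinates by
`(T u)ⱼ = D^{2j}(uⱼ) + (D^{2j+1})* (u_{j+1})` (with `u_{m+1} = 0`). Then `T` is
Fredholm and `ind T = χ(V) = ∑ᵢ (-1)ⁱ dim Hⁱ(V)`, where `H⁰ = ker D⁰` and
`Hⁱ⁺¹ = ker Dⁱ⁺¹ / im Dⁱ`. -/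
theorem stmt_19 {V : ℕ → Type*} [∀ i, NormedAddCommGroup (V i)]
    [∀ i, InnerProductSpace ℂ (V i)] [∀ i, CompleteSpace (V i)]
    (D : ∀ i, V i →L[ℂ] V (i+1)) (m : ℕ)
    (hD2 : ∀ i, (D (i+1)).comp (D i) = 0)
    (hsupp : ∀ i, 2*m+1 < i → Subsingleton (V i))
    (hfin0 : FiniteDimensional ℂ ↥(LinearMap.ker (D 0).toLinearMap))
    (hfin : ∀ i, FiniteDimensional ℂ (↥(LinearMap.ker (D (i+1)).toLinearMap) ⧸
        Submodule.comap (LinearMap.ker (D (i+1)).toLinearMap).subtype (LinearMap.range (D i).toLinearMap)))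
    (T : (PiLp 2 fun j : Fin (m+1) => V (2*(j : ℕ)))
        →L[ℂ] (PiLp 2 fun j : Fin (m+1) => V (2*(j : ℕ)+1)))
    (hT : ∀ (u : PiLp 2 fun j : Fin (m+1) => V (2*(j : ℕ))) (j : Fin (m+1)),
      T u j = D (2*(j : ℕ)) (u j) +
        ContinuousLinearMap.adjoint (D (2*(j : ℕ)+1))
          (if h : (j : ℕ) + 1 < m + 1 then u ⟨(j : ℕ)+1, h⟩ else 0)) :
    (FiniteDimensional ℂ ↥(LinearMap.ker T.toLinearMap) ∧
      FiniteDimensional ℂ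
        ((PiLp 2 fun j : Fin (m+1) => V (2*(j : ℕ)+1)) ⧸ LinearMap.range T.toLinearMap)) ∧
    (Module.finrank ℂ ↥(LinearMap.ker T.toLinearMap) : ℤ)
        - Module.finrank ℂ
            ((PiLp 2 fun j : Fin (m+1) => V (2*(j : ℕ)+1)) ⧸ LinearMap.range T.toLinearMap)
      = (Module.finrank ℂ ↥(LinearMap.ker (D 0 : V 0 →ₗ[ℂ] V (0+1))) : ℤ)
        + ∑ i ∈ Finset.range (2*m+1), (-1 : ℤ)^(i+1) *
            (Module.finrank ℂ (↥(LinearMap.ker (D (i+1) : V (i+1) →ₗ[ℂ] V (i+1+1))) ⧸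
              Submodule.comap (LinearMap.ker (D (i+1) : V (i+1) →ₗ[ℂ] V (i+1+1))).subtype
                (LinearMap.range (D i : V i →ₗ[ℂ] V (i+1)))) : ℤ) := by
  have hD : IsFredholmComplex D := ⟨hD2, hfin0, hfin⟩
  have := hD.finiteDimensional_harmonicSpace
  let eK := IsRolledUp.kerEquiv hT hD2
  let eC := IsRolledUp.cokerEquiv hT hD hsupp
  refine ⟨⟨eK.symm.finiteDimensional, eC.symm.finiteDimensional⟩, ?_⟩
  rw [eK.finrank_eq, eC.finrank_eq, Module.finrank_pi_fintype, Module.finrank_pi_fintype]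
  simp only [hD.finrank_harmonicSpace]
  push_cast
  rw [Fin.sum_univ_eq_sum_range (fun j ↦ (bettiNumber D (2 * j) : ℤ)),
    Fin.sum_univ_eq_sum_range (fun j ↦ (bettiNumber D (2 * j + 1) : ℤ)),
    Finset.sum_range_even_sub_sum_range_odd (fun i ↦ (bettiNumber D i : ℤ)),
    show 2 * (m + 1) = 2 * m + 1 + 1 by ring, Finset.sum_range_succ', pow_zero, one_mul, add_comm]
  rfl
end
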